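/- Let f: ℝ → ℝ be a concave function that is not affine. Then there exists s₀ ∈ ℝ and an affine function p with p(s₀) = f(s₀), p ≥ f on ℝ, and lim_{s→+∞} (p(s) - f(s)) = +∞ and lim_{s→-∞} (p(s) - f(s)) = +∞. -/
import Mathlib

open Filter

-- slope inequalities multiplied out
lemma slope_key (f : ℝ → ℝ) (hf : ConcaveOn ℝ Set.univ f) {x y z : ℝ}
    (hxy : x < y) (hyz : y < z) :
    (f z - f y) * (y - x) ≤ (f y - f x) * (z - y) := by
  have h := hf.slope_anti_adjacent (Set.mem_univ x) (Set.mem_univ z) hxy hyz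
  rw [div_le_div_iff₀ (by linarith) (by linarith)] at h
  linarith

lemma exists_strict_triple (f : ℝ → ℝ) (hf : ConcaveOn ℝ Set.univ f)
    (hna : ¬ ∃ a b : ℝ, ∀ x, f x = a * x + b) :
    ∃ x y z : ℝ, x < y ∧ y < z ∧ (f z - f y) * (y - x) < (f y - f x) * (z - y) := by
  push_neg at hna
  obtain ⟨c, hc⟩ := hna (f 1 - f 0) (f 0)
  rcases lt_trichotomy c 0 with h0 | h0 | h0
  · -- triple (c,0,1)
    refine ⟨c, 0, 1, h0, one_pos, ?_⟩
    have h := slope_key f hf h0 one_pos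
    rcases h.lt_or_eq with h' | h'
    · exact h'
    · exfalso; apply hc; nlinarith
  · exfalso; apply hc; rw [h0]; ring
  rcases lt_trichotomy c 1 with h1 | h1 | h1
  · -- triple (0,c,1)
    refine ⟨0, c, 1, h0, h1, ?_⟩
    have h := slope_key f hf h0 h1
    rcases h.lt_or_eq with h' | h'
    · exact h'
    · exfalso; apply hc; nlinarith
  · exfalso; apply hc; rw [h1]; ring
  · -- triple (0,1,c)
    refine ⟨0, 1, c, one_pos, h1, ?_⟩
    have h := slope_key f hf one_pos h1
    rcases h.lt_or_eq with h' | h'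
    · exact h'
    · exfalso; apply hc; nlinarith

theorem concave_not_affine_supporting_line (f : ℝ → ℝ)
    (hf : ConcaveOn ℝ Set.univ f) (hna : ¬ ∃ a b : ℝ, ∀ x, f x = a * x + b) :
    ∃ s₀ a b : ℝ, a * s₀ + b = f s₀ ∧ (∀ s, f s ≤ a * s + b) ∧
      Filter.Tendsto (fun s => a * s + b - f s) Filter.atTop Filter.atTop ∧
      Filter.Tendsto (fun s => a * s + b - f s) Filter.atBot Filter.atTop := by
  obtain ⟨x, y, z, hxy, hyz, hstrict⟩ := exists_strict_triple f hf hna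
  have hxz : x < z := hxy.trans hyz
  set m₁ : ℝ := (f y - f x) / (y - x) with hm₁
  set m₂ : ℝ := (f z - f y) / (z - y) with hm₂
  set a : ℝ := (f z - f x) / (z - x) with ha
  have hyx : (0:ℝ) < y - x := by linarith
  have hzy : (0:ℝ) < z - y := by linarith
  have hzx : (0:ℝ) < z - x := by linarith
  have hm12 : m₂ < m₁ := by
    rw [hm₁, hm₂, div_lt_div_iff₀ hzy hyx]; linarith
  have ham₁ : a < m₁ := by
    rw [ha, hm₁, div_lt_div_iff₀ hzx hyx]; nlinarith
  have ham₂ : m₂ < a := by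
    rw [ha, hm₂, div_lt_div_iff₀ hzy hzx]; nlinarith
  -- continuity on [x,z] and maximizer
  have hcont : ContinuousOn (fun s => f s - (a * s + (f x - a * x))) (Set.Icc x z) := by
    have := hf.continuousOn isOpen_univ
    exact ((this.mono (Set.subset_univ _)).sub (by fun_prop))
  obtain ⟨s₀, hs₀mem, hs₀max⟩ :=
    (isCompact_Icc).exists_isMaxOn (Set.nonempty_Icc.2 hxz.le) hcont
  set M : ℝ := f s₀ - (a * s₀ + (f x - a * x)) with hM
  have hM0 : 0 ≤ M := by
    have h := hs₀max (Set.left_mem_Icc.2 hxz.le)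
    simp only [isMaxOn_iff] at hs₀max
    have h2 := hs₀max x (Set.left_mem_Icc.2 hxz.le)
    rw [hM]; linarith
  set b : ℝ := f x - a * x + M with hb
  -- bounds outside [x,z]
  have hleft : ∀ s, s < x → f s ≤ f x + m₁ * (s - x) := by
    intro s hs
    have h := slope_key f hf hs hxy
    have : (f x - f s) * (y - x) ≥ m₁ * (y - x) * (x - s) := by
      rw [hm₁]; field_simp; nlinarith
    nlinarith
  have hright : ∀ s, z < s → f s ≤ f z + m₂ * (s - z) := by
    intro s hs
    have h := slope_key f hf hyz hs
    have : (f s - f z) * (z - y) ≤ m₂ * (z - y) * (s - z) := by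
      rw [hm₂]; field_simp; nlinarith
    nlinarith
  -- f x and f z on the line L s = a s + (f x - a x)
  have hLz : f z = a * z + (f x - a * x) := by
    rw [ha]; field_simp; ring
  have hsupport : ∀ s, f s ≤ a * s + b := by
    intro s
    rcases lt_trichotomy s x with h | h | h
    · have := hleft s h
      have : f s ≤ a * s + (f x - a * x) := by nlinarith
      rw [hb]; linarith
    · rw [hb, h]; linarith
    rcases le_or_gt s z with h2 | h2
    · have := hs₀max (Set.mem_Icc.2 ⟨h.le, h2⟩)
      simp only [Set.mem_setOf_eq] at this
      rw [hb]; simp only [isMaxOn_iff] at *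
      have hle : f s - (a * s + (f x - a * x)) ≤ M := this
      linarith
    · have := hright s h2
      have : f s ≤ a * s + (f x - a * x) := by nlinarith
      rw [hb]; linarith
  refine ⟨s₀, a, b, by rw [hb, hM]; ring, hsupport, ?_, ?_⟩
  · -- atTop
    have hgrow : Tendsto (fun s => (a - m₂) * s + (b - f z + m₂ * z)) atTop atTop := by
      apply tendsto_atTop_add_const_right
      exact Tendsto.const_mul_atTop (by linarith) tendsto_id
    apply tendsto_atTop_mono' _ _ hgrow
    filter_upwards [eventually_gt_atTop z] with s hs
    have := hright s hs
    show a * s + b - f s ≥ _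
    linarith
  · -- atBot
    have hgrow : Tendsto (fun s => (a - m₁) * s + (b - f x + m₁ * x)) atBot atTop := by
      apply tendsto_atTop_add_const_right
      exact (tendsto_const_mul_atTop_of_neg (by linarith)).2 tendsto_id
    apply tendsto_atTop_mono' _ _ hgrow
    filter_upwards [eventually_lt_atBot x] with s hs
    have := hleft s hs
    show a * s + b - f s ≥ _
    linarith
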